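/- arXiv:1402.3895 — 2 statements merged into one kernel-verified Lean document; each statement's English description precedes it below -/
import Mathlib

section
/- Duality theorem (index codes and GLRCs), forward direction: Let F be a field, n, p, k natural numbers, and S : Fin n → Finset (Fin n) a side-information assignment with i ∉ S i. Let V be a k-dimensional subspace of F^(n·p) (viewing vectors as n blocks of p coordinates). Suppose that for every i there exists a linear map φ_i taking (the k-dimensional projection of x onto a basis of V's row space, together with the blocks x_j for j ∈ S i) to the block x_i, valid for all x ∈ F^(n·p). Then every vector z in the dual subspace V^⊥ satisfies: the i-th block of z is determined linearly by the blocks z_j for j ∈ S i; concretely, φ_i(0, {z_j}_{j∈S i}) = z_i for all z ∈ V^⊥. -/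
/-- The dual code of a linear code `C ⊆ F^ι` with respect to the standard
bilinear form: `{y | ∀ x ∈ C, ∑ i, x i * y i = 0}`. -/
def dualCode {F : Type*} [Field F] {ι : Type*} [Fintype ι]
    (C : Submodule F (ι → F)) : Submodule F (ι → F) where
  carrier := {y | ∀ x ∈ C, ∑ i, x i * y i = 0}
  zero_mem' := by intro x hx; simp
  add_mem' := by
    intro a b ha hb x hx
    simp [mul_add, Finset.sum_add_distrib, ha x hx, hb x hx]
  smul_mem' := by
    intro c y hy x hx
    simp [smul_eq_mul, mul_left_comm, ← Finset.mul_sum, hy x hx]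

theorem mem_dualCode_span_range_iff {F ι κ : Type*} [Field F] [Fintype ι]
    {v : κ → ι → F} {z : ι → F} :
    z ∈ dualCode (Submodule.span F (Set.range v)) ↔ ∀ j, ∑ t, v j t * z t = 0 := by
  refine ⟨fun hz j => hz (v j) (Submodule.subset_span ⟨j, rfl⟩), fun h x hx => ?_⟩
  induction hx using Submodule.span_induction with
  | mem x hx => obtain ⟨j, rfl⟩ := hx; exact h j
  | zero => simp
  | add x y _ _ hx hy => simp [add_mul, Finset.sum_add_distrib, hx, hy]
  | smul c x _ hx => simp [mul_assoc, ← Finset.mul_sum, hx]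

theorem stmt_5_general {F : Type*} [Field F] {n p k : ℕ}
    (S : Fin n → Finset (Fin n))
    (V : Submodule F (Fin n × Fin p → F))
    (v : Fin k → (Fin n × Fin p → F))
    (hspan : Submodule.span F (Set.range v) = V)
    (φ : ∀ i : Fin n,
      ((Fin k → F) × ({j // j ∈ S i} × Fin p → F)) →ₗ[F] (Fin p → F))
    (hdec : ∀ (i : Fin n) (x : Fin n × Fin p → F),
      φ i (fun j => ∑ t, v j t * x t, fun jl => x (jl.1.1, jl.2)) =
        fun l => x (i, l)) :
    ∀ z ∈ dualCode V, ∀ i : Fin n,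
      φ i (0, fun jl => z (jl.1.1, jl.2)) = fun l => z (i, l) := by
  intro z hz i
  have hencode : (fun j => ∑ t, v j t * z t) = 0 :=
    funext (mem_dualCode_span_range_iff.mp (hspan ▸ hz))
  rw [← hencode]
  exact hdec i z

/-- Duality between index codes and GLRCs, forward direction: if `V` is a valid
vector linear index code for the side information sets `S` (with linear decoding
maps `φ i`), then every codeword `z` of the dual code `V^⊥` satisfies the GLRC
recoverability conditions: `φ i (0, {z_j}_{j ∈ S i}) = z_i`. -/
theorem stmt_5 {F : Type*} [Field F] {n p k : ℕ}
    (S : Fin n → Finset (Fin n)) (hS : ∀ i, i ∉ S i)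
    (V : Submodule F (Fin n × Fin p → F)) (hdim : Module.finrank F V = k)
    (v : Fin k → (Fin n × Fin p → F))
    (hspan : Submodule.span F (Set.range v) = V)
    (φ : ∀ i : Fin n,
      ((Fin k → F) × ({j // j ∈ S i} × Fin p → F)) →ₗ[F] (Fin p → F))
    (hdec : ∀ (i : Fin n) (x : Fin n × Fin p → F),
      φ i (fun j => ∑ t, v j t * x t, fun jl => x (jl.1.1, jl.2)) =
        fun l => x (i, l)) :
    ∀ z ∈ dualCode V, ∀ i : Fin n,
      φ i (0, fun jl => z (jl.1.1, jl.2)) = fun l => z (i, l) :=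
  stmt_5_general S V v hspan φ hdec
end

section
/- Duality theorem, reverse direction: Let F be a field and D a subspace of F^(n·p) such that for every i there is a linear map ψ_i with ψ_i({z_j}_{j ∈ S i}) = z_i for all z ∈ D (every block of a codeword is linearly recoverable from its recoverability set). Let V = D^⊥ be the dual subspace. Then the broadcast of the projection of x onto V (i.e., the inner products of x with a basis of V) together with the side-information blocks {x_j}_{j ∈ S i} determines x_i: there exist linear decoding maps φ_i such that φ_i(V-encoding of x, {x_j}_{j ∈ S i}) = x_i for all x ∈ F^(n·p). -/
/-! If `x` has zero encoding and zero side information at `i`, then `x` is orthogonal to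
`dualCode D`, so `x ∈ dualCode (dualCode D) = D` (finite dimension), and recoverability gives
`x_i = ψ_i 0 = 0`. Hence the kernel of `x ↦ (encoding of x, side information of x)` lies in the
kernel of `x ↦ x_i`, and over a field the latter map then factors linearly through the former. -/

open Matrix LinearMap LinearMap.BilinForm

theorem LinearMap.exists_comp_eq_of_ker_le {K V W U : Type*} [DivisionRing K]
    [AddCommGroup V] [Module K V] [AddCommGroup W] [Module K W] [AddCommGroup U] [Module K U]
    (f : V →ₗ[K] W) (g : V →ₗ[K] U) (h : ker f ≤ ker g) :
    ∃ φ : W →ₗ[K] U, φ ∘ₗ f = g := by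
  obtain ⟨φ, hφ⟩ :=
    ((ker f).liftQ g h ∘ₗ f.quotKerEquivRange.symm.toLinearMap).exists_extend
  refine ⟨φ, LinearMap.ext fun x => ?_⟩
  simpa [quotKerEquivRange_symm_apply_image] using
    LinearMap.congr_fun hφ ⟨f x, mem_range_self f x⟩

section DualCode

variable {F ι : Type*} [Field F] [Fintype ι]

lemma dotProductBilin_isRefl : (dotProductBilin (m := ι) (A := F) F F).IsRefl :=
  fun x y h => (dotProduct_comm y x).trans h

lemma dotProductBilin_nondegenerate : (dotProductBilin (m := ι) (A := F) F F).Nondegenerate :=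
  dotProductBilin_isRefl.nondegenerate_iff_separatingLeft.2 fun x hx => dotProduct_eq_zero x hx

lemma dualCode_eq_orthogonal (C : Submodule F (ι → F)) :
    dualCode C = BilinForm.orthogonal (dotProductBilin F F) C := rfl

lemma dualCode_dualCode (C : Submodule F (ι → F)) : dualCode (dualCode C) = C := by
  simp only [dualCode_eq_orthogonal]
  exact orthogonal_orthogonal (B := dotProductBilin F F) dotProductBilin_nondegenerate
    dotProductBilin_isRefl C

lemma mem_dualCode_iff {C : Submodule F (ι → F)} {y : ι → F} :
    y ∈ dualCode C ↔ ∀ x ∈ C, x ⬝ᵥ y = 0 := Iff.rfl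

lemma mem_dualCode_span_iff {s : Set (ι → F)} {y : ι → F} :
    y ∈ dualCode (Submodule.span F s) ↔ ∀ x ∈ s, x ⬝ᵥ y = 0 := by
  refine ⟨fun h x hx => h x (Submodule.subset_span hx), fun h => mem_dualCode_iff.2 ?_⟩
  intro x hx
  induction hx using Submodule.span_induction with
  | mem x hx => exact h x hx
  | zero => exact zero_dotProduct y
  | add x z _ _ hx hz => rw [add_dotProduct, hx, hz, add_zero]
  | smul c x _ hx => rw [smul_dotProduct, hx, smul_zero]

theorem exists_decoder_of_recovery {κ W U : Type*} [AddCommGroup W] [Module F W]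
    [AddCommGroup U] [Module F U] (D : Submodule F (ι → F)) (v : κ → ι → F)
    (hspan : dualCode D ≤ Submodule.span F (Set.range v))
    (side : (ι → F) →ₗ[F] W) (target : (ι → F) →ₗ[F] U) (ψ : W →ₗ[F] U)
    (hrec : ∀ z ∈ D, ψ (side z) = target z) :
    ∃ φ : (κ → F) × W →ₗ[F] U, φ ∘ₗ (of v).mulVecLin.prod side = target := by
  refine exists_comp_eq_of_ker_le _ _ fun x hx => ?_
  obtain ⟨henc, hside⟩ : (of v).mulVecLin x = 0 ∧ side x = 0 := Prod.mk_eq_zero.1 hx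
  have hxD : x ∈ D := by
    rw [← dualCode_dualCode D]
    refine fun w hw => mem_dualCode_span_iff.2 ?_ w (hspan hw)
    rintro _ ⟨j, rfl⟩
    exact congr_fun henc j
  rw [mem_ker, ← hrec x hxD, hside, map_zero]

end DualCode

theorem stmt_6_general {F : Type*} [Field F] {n p k : ℕ}
    (S : Fin n → Finset (Fin n))
    (D : Submodule F (Fin n × Fin p → F))
    (ψ : ∀ i : Fin n, ({j // j ∈ S i} × Fin p → F) →ₗ[F] (Fin p → F))
    (hrec : ∀ (i : Fin n), ∀ z ∈ D,
      ψ i (fun jl => z (jl.1.1, jl.2)) = fun l => z (i, l))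
    (v : Fin k → (Fin n × Fin p → F))
    (hspan : Submodule.span F (Set.range v) = dualCode D) :
    ∃ φ : ∀ i : Fin n,
        ((Fin k → F) × ({j // j ∈ S i} × Fin p → F)) →ₗ[F] (Fin p → F),
      ∀ (i : Fin n) (x : Fin n × Fin p → F),
        φ i (fun j => ∑ t, v j t * x t, fun jl => x (jl.1.1, jl.2)) =
          fun l => x (i, l) := by
  choose φ hφ using fun i => exists_decoder_of_recovery D v hspan.ge
    (funLeft F F fun jl : {j // j ∈ S i} × Fin p => (jl.1.1, jl.2))
    (funLeft F F fun l => (i, l)) (ψ i) (hrec i)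
  exact ⟨φ, fun i x => LinearMap.congr_fun (hφ i) x⟩

/-- Duality between index codes and GLRCs, reverse direction: if every block of
every codeword of `D` is linearly recoverable from its recoverability set `S i`,
then the dual code `V = D^⊥` is a valid index code: encoding `x` by its inner
products with a basis of `V`, each user `i` can linearly decode `x_i` from the
encoding and the side information blocks `{x_j}_{j ∈ S i}`. -/
theorem stmt_6 {F : Type*} [Field F] [Fintype F] {n p k : ℕ}
    (S : Fin n → Finset (Fin n)) (hS : ∀ i, i ∉ S i)
    (D : Submodule F (Fin n × Fin p → F))
    (ψ : ∀ i : Fin n, ({j // j ∈ S i} × Fin p → F) →ₗ[F] (Fin p → F))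
    (hrec : ∀ (i : Fin n), ∀ z ∈ D,
      ψ i (fun jl => z (jl.1.1, jl.2)) = fun l => z (i, l))
    (v : Fin k → (Fin n × Fin p → F)) (hli : LinearIndependent F v)
    (hspan : Submodule.span F (Set.range v) = dualCode D) :
    ∃ φ : ∀ i : Fin n,
        ((Fin k → F) × ({j // j ∈ S i} × Fin p → F)) →ₗ[F] (Fin p → F),
      ∀ (i : Fin n) (x : Fin n × Fin p → F),
        φ i (fun j => ∑ t, v j t * x t, fun jl => x (jl.1.1, jl.2)) =
          fun l => x (i, l) :=
  stmt_6_general S D ψ hrec v hspan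
end
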